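/- arXiv:1009.5810 — 7 statements merged into one kernel-verified Lean document; each statement's English description precedes it below -/
import Mathlib

section
/- For f(x) = (1 + xⁿ)/(K + xⁿ) with K > 1 and n > 1, the system of tangency conditions x/κ_d = f(x) and 1/(κ_d n(K−1)) = x^{n−1}/(K + xⁿ)² has real positive solutions x± given by x± = ((K−1)/2 · [ (n − (K+1)/(K−1)) ± √(n² − 2n(K+1)/(K−1) + 1) ])^{1/n}, provided the discriminant n² − 2n(K+1)/(K−1) + 1 is nonnegative. -/
/-!
Writing `y = xⁿ` and `κ_d = x (K + y) / (1 + y)`, the first tangency condition holds by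
construction and the second one reduces to the quadratic `(1 + y)(K + y) = n (K - 1) y`, whose
roots are the two values `y±` of the formula. Both roots are positive: their product is `K > 0`,
and their sum `n (K - 1) - (K + 1)` is positive because the discriminant is nonnegative.
-/

lemma pos_of_sq_sub_mul_add_eq_zero {b c y : ℝ} (hb : 0 < b) (hc : 0 < c)
    (h : y ^ 2 - b * y + c = 0) : 0 < y := by
  by_contra! hy
  nlinarith [mul_nonneg hb.le (neg_nonneg.mpr hy)]

lemma add_one_lt_mul_sub_one_of_discr_nonneg {K : ℝ} {n : ℕ} (hK : 1 < K) (hn : 1 ≤ n)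
    (hdisc : 0 ≤ (n : ℝ) ^ 2 - 2 * n * (K + 1) / (K - 1) + 1) :
    K + 1 < n * (K - 1) := by
  have hK1 : 0 < K - 1 := sub_pos.mpr hK
  have hn1 : (1 : ℝ) ≤ n := by exact_mod_cast hn
  have hscaled : 0 ≤ (n : ℝ) ^ 2 * (K - 1) - 2 * n * (K + 1) + (K - 1) := by
    have h := mul_nonneg hK1.le hdisc
    field_simp at h
    linarith
  by_contra! hle
  nlinarith [mul_le_mul_of_nonneg_left hle (by positivity : (0 : ℝ) ≤ n)]

lemma tangency_quadratic_of_sq_eq_discr {K t y : ℝ} {n : ℕ} (hK : K ≠ 1)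
    (ht : t ^ 2 = (n : ℝ) ^ 2 - 2 * n * (K + 1) / (K - 1) + 1)
    (hy : y = (K - 1) / 2 * (((n : ℝ) - (K + 1) / (K - 1)) + t)) :
    (1 + y) * (K + y) = n * (K - 1) * y := by
  have hK1 : K - 1 ≠ 0 := sub_ne_zero.mpr hK
  have ht' : (K - 1) ^ 2 * t ^ 2 = (n : ℝ) ^ 2 * (K - 1) ^ 2 - 2 * n * (K + 1) * (K - 1)
      + (K - 1) ^ 2 := by
    rw [ht]; field_simp
  subst hy
  field_simp
  linear_combination ht'

lemma tangency_of_pow_quadratic {K x : ℝ} {n : ℕ} (hK : 0 ≤ K) (hn : 0 < n) (hx : 0 < x)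
    (hquad : (1 + x ^ n) * (K + x ^ n) = n * (K - 1) * x ^ n) :
    ∃ κd > 0, x / κd = (1 + x ^ n) / (K + x ^ n) ∧
      1 / (κd * n * (K - 1)) = x ^ (n - 1) / (K + x ^ n) ^ 2 := by
  have hy : 0 < x ^ n := pow_pos hx n
  have h1y : 1 + x ^ n ≠ 0 := by positivity
  have hKy : K + x ^ n ≠ 0 := by positivity
  have hK1 : K - 1 ≠ 0 := by
    intro h
    rw [h, mul_zero, zero_mul] at hquad
    exact mul_ne_zero h1y hKy hquad
  have hpred : x ^ (n - 1) = x ^ n / x := by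
    rw [eq_div_iff hx.ne', ← pow_succ, Nat.sub_add_cancel hn]
  refine ⟨x * (K + x ^ n) / (1 + x ^ n), by positivity, by field_simp, ?_⟩
  rw [hpred]
  field_simp
  linear_combination hquad

lemma inducible_tangency_of_sq_eq_discr {K t x : ℝ} {n : ℕ} (hK : 1 < K) (hn : 1 < n)
    (hdisc : 0 ≤ (n : ℝ) ^ 2 - 2 * n * (K + 1) / (K - 1) + 1)
    (ht : t ^ 2 = (n : ℝ) ^ 2 - 2 * n * (K + 1) / (K - 1) + 1)
    {f : ℝ → ℝ} (hf : ∀ x, f x = (1 + x ^ n) / (K + x ^ n))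
    (hx : x = ((K - 1) / 2 * (((n : ℝ) - (K + 1) / (K - 1)) + t)) ^ ((1 : ℝ) / n)) :
    0 < x ∧ ∃ κd > 0, x / κd = f x ∧
      1 / (κd * n * (K - 1)) = x ^ (n - 1) / (K + x ^ n) ^ 2 := by
  set y := (K - 1) / 2 * (((n : ℝ) - (K + 1) / (K - 1)) + t) with hy_def
  have hquad : (1 + y) * (K + y) = n * (K - 1) * y :=
    tangency_quadratic_of_sq_eq_discr hK.ne' ht hy_def
  have hsum : 0 < n * (K - 1) - (K + 1) :=
    sub_pos.mpr (add_one_lt_mul_sub_one_of_discr_nonneg hK hn.le hdisc)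
  have hy : 0 < y :=
    pos_of_sq_sub_mul_add_eq_zero hsum (by linarith : (0 : ℝ) < K) (by linear_combination hquad)
  have hxn : x ^ n = y := by
    rw [hx, one_div, Real.rpow_inv_natCast_pow hy.le (by omega)]
  have hxpos : 0 < x := hx ▸ Real.rpow_pos_of_pos hy _
  rw [hf]
  rw [← hxn] at hquad
  exact ⟨hxpos, tangency_of_pow_quadratic (by linarith) (by omega) hxpos hquad⟩

/-- Tangency conditions x/κ_d = f(x) and 1/(κ_d n (K−1)) = x^{n−1}/(K+xⁿ)² have positive
solutions x± given by the explicit formula, provided the discriminant is nonnegative. -/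
theorem inducible_tangency_points
    (K : ℝ) (n : ℕ) (hK : 1 < K) (hn : 1 < n)
    (hdisc : 0 ≤ (n : ℝ) ^ 2 - 2 * n * (K + 1) / (K - 1) + 1)
    (f : ℝ → ℝ) (hf : ∀ x, f x = (1 + x ^ n) / (K + x ^ n))
    (xp xm : ℝ)
    (hxp : xp = ((K - 1) / 2 * (((n : ℝ) - (K + 1) / (K - 1)) +
        Real.sqrt ((n : ℝ) ^ 2 - 2 * n * (K + 1) / (K - 1) + 1))) ^ ((1 : ℝ) / n))
    (hxm : xm = ((K - 1) / 2 * (((n : ℝ) - (K + 1) / (K - 1)) -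
        Real.sqrt ((n : ℝ) ^ 2 - 2 * n * (K + 1) / (K - 1) + 1))) ^ ((1 : ℝ) / n)) :
    (0 < xp ∧ ∃ κd > 0, xp / κd = f xp ∧
        1 / (κd * n * (K - 1)) = xp ^ (n - 1) / (K + xp ^ n) ^ 2) ∧
    (0 < xm ∧ ∃ κd > 0, xm / κd = f xm ∧
        1 / (κd * n * (K - 1)) = xm ^ (n - 1) / (K + xm ^ n) ^ 2) := by
  have hsqrt := Real.sq_sqrt hdisc
  rw [sub_eq_add_neg] at hxm
  exact ⟨inducible_tangency_of_sq_eq_discr hK hn hdisc hsqrt hf hxp,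
    inducible_tangency_of_sq_eq_discr hK hn hdisc (by rwa [neg_sq]) hf hxm⟩
end

section
/- A necessary condition for the equation x/κ_d = (1 + xⁿ)/(K + xⁿ) (with K > 1, n > 1) to have three distinct positive solutions for some κ_d > 0 is that K ≥ ((n+1)/(n−1))². -/
open Set

private lemma crit_point (K κd : ℝ) (n : ℕ) (hK : 0 < K) (hn : 1 < n)
    (a b : ℝ) (ha : 0 < a) (hab : a < b)
    (ea : a * (K + a ^ n) = κd * (1 + a ^ n))
    (eb : b * (K + b ^ n) = κd * (1 + b ^ n)) :
    ∃ c, a < c ∧ c < b ∧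
      (c ^ n) ^ 2 - (((n : ℝ) - 1) * K - ((n : ℝ) + 1)) * c ^ n + K = 0 := by
  set g : ℝ → ℝ := fun x => x * (K + x ^ n) / (1 + x ^ n) with hg
  set f' : ℝ → ℝ := fun x =>
    ((1 * (K + x ^ n) + x * ((n : ℝ) * x ^ (n - 1))) * (1 + x ^ n)
      - x * (K + x ^ n) * ((n : ℝ) * x ^ (n - 1))) / (1 + x ^ n) ^ 2 with hf'
  have hpos : ∀ x : ℝ, 0 < x → (0:ℝ) < 1 + x ^ n := fun x hx => by positivity
  have hcont : ContinuousOn g (Icc a b) := by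
    apply ContinuousOn.div (by fun_prop) (by fun_prop)
    intro x hx
    exact ne_of_gt (hpos x (lt_of_lt_of_le ha hx.1))
  have hga : g a = κd := by
    rw [hg]
    simp only
    rw [div_eq_iff (ne_of_gt (hpos a ha)), ea]
  have hgb : g b = κd := by
    rw [hg]
    simp only
    rw [div_eq_iff (ne_of_gt (hpos b (ha.trans hab))), eb]
  have hderiv : ∀ x ∈ Ioo a b, HasDerivAt g (f' x) x := by
    intro x hx
    have hxpos : 0 < x := ha.trans hx.1
    have hu : HasDerivAt (fun x : ℝ => x * (K + x ^ n))
        (1 * (K + x ^ n) + x * ((n : ℝ) * x ^ (n - 1))) x :=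
      (hasDerivAt_id x).mul ((hasDerivAt_pow n x).const_add K)
    have hv : HasDerivAt (fun x : ℝ => 1 + x ^ n) ((n : ℝ) * x ^ (n - 1)) x :=
      (hasDerivAt_pow n x).const_add 1
    exact hu.div hv (ne_of_gt (hpos x hxpos))
  obtain ⟨c, hc, hc0⟩ := exists_hasDerivAt_eq_zero hab hcont (hga.trans hgb.symm) hderiv
  refine ⟨c, hc.1, hc.2, ?_⟩
  have hcpos : 0 < c := ha.trans hc.1
  have hnum : (1 * (K + c ^ n) + c * ((n : ℝ) * c ^ (n - 1))) * (1 + c ^ n)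
      - c * (K + c ^ n) * ((n : ℝ) * c ^ (n - 1)) = 0 := by
    have hden : ((1 : ℝ) + c ^ n) ^ 2 ≠ 0 := by positivity
    have := hc0
    rw [hf'] at this
    simp only at this
    exact (div_eq_zero_iff.mp this).resolve_right hden
  have hcc : c * c ^ (n - 1) = c ^ n := by
    rw [← pow_succ']
    congr 1
    omega
  linear_combination hnum - (n : ℝ) * (1 - K) * hcc

private lemma three_roots (K κd : ℝ) (n : ℕ) (hK : 1 < K) (hn : 1 < n)
    (a b c : ℝ) (ha : 0 < a) (hab : a < b) (hbc : b < c)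
    (ea : a * (K + a ^ n) = κd * (1 + a ^ n))
    (eb : b * (K + b ^ n) = κd * (1 + b ^ n))
    (ec : c * (K + c ^ n) = κd * (1 + c ^ n)) :
    (((n : ℝ) + 1) / ((n : ℝ) - 1)) ^ 2 ≤ K := by
  have hK0 : (0:ℝ) < K := by linarith
  obtain ⟨c₁, hac₁, hc₁b, q1⟩ := crit_point K κd n hK0 hn a b ha hab ea eb
  obtain ⟨c₂, hbc₂, hc₂c, q2⟩ := crit_point K κd n hK0 hn b c (ha.trans hab) hbc eb ec
  set y1 := c₁ ^ n with hy1
  set y2 := c₂ ^ n with hy2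
  have hc₁pos : 0 < c₁ := ha.trans hac₁
  have hy : y1 < y2 := by
    apply pow_lt_pow_left₀ (hc₁b.trans hbc₂) hc₁pos.le
    omega
  have hB : ((n : ℝ) - 1) * K - ((n : ℝ) + 1) = y1 + y2 := by
    have h0 : (y1 - y2) * (y1 + y2 - (((n : ℝ) - 1) * K - ((n : ℝ) + 1))) = 0 := by
      linear_combination q1 - q2
    have h1 : y1 - y2 ≠ 0 := by linarith
    have := (mul_eq_zero.mp h0).resolve_left h1
    linarith
  have hKe : K = y1 * y2 := by linear_combination q1 + y1 * hB
  have hsq : 0 < (y2 - y1) ^ 2 := pow_pos (by linarith) 2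
  have hdisc : 4 * K < (((n : ℝ) - 1) * K - ((n : ℝ) + 1)) ^ 2 := by nlinarith
  have hN : (2 : ℝ) ≤ (n : ℝ) := by exact_mod_cast hn
  have hN1 : (0:ℝ) < ((n:ℝ) - 1) ^ 2 := by nlinarith
  rw [div_pow, div_le_iff₀ hN1]
  nlinarith [mul_pos (sub_pos.mpr hK) (sub_pos.mpr hK)]

/-- Necessary condition for three distinct positive steady states: K ≥ ((n+1)/(n−1))². -/
theorem bistability_necessary_K
    (K κd : ℝ) (n : ℕ) (hK : 1 < K) (hn : 1 < n) (hκ : 0 < κd)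
    (x₁ x₂ x₃ : ℝ) (h₁ : 0 < x₁) (h₂ : 0 < x₂) (h₃ : 0 < x₃)
    (h12 : x₁ ≠ x₂) (h13 : x₁ ≠ x₃) (h23 : x₂ ≠ x₃)
    (e₁ : x₁ / κd = (1 + x₁ ^ n) / (K + x₁ ^ n))
    (e₂ : x₂ / κd = (1 + x₂ ^ n) / (K + x₂ ^ n))
    (e₃ : x₃ / κd = (1 + x₃ ^ n) / (K + x₃ ^ n)) :
    (((n : ℝ) + 1) / ((n : ℝ) - 1)) ^ 2 ≤ K := by
  have hK0 : (0:ℝ) < K := by linarith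
  have conv : ∀ x : ℝ, 0 < x → x / κd = (1 + x ^ n) / (K + x ^ n) →
      x * (K + x ^ n) = κd * (1 + x ^ n) := by
    intro x hx e
    have hden : (0:ℝ) < K + x ^ n := by positivity
    rw [div_eq_div_iff hκ.ne' hden.ne'] at e
    linarith [e]
  have E₁ := conv x₁ h₁ e₁
  have E₂ := conv x₂ h₂ e₂
  have E₃ := conv x₃ h₃ e₃
  rcases lt_trichotomy x₁ x₂ with h | h | h
  · rcases lt_trichotomy x₂ x₃ with h' | h' | h'
    · exact three_roots K κd n hK hn x₁ x₂ x₃ h₁ h h' E₁ E₂ E₃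
    · exact absurd h' h23
    · rcases lt_trichotomy x₁ x₃ with h'' | h'' | h''
      · exact three_roots K κd n hK hn x₁ x₃ x₂ h₁ h'' h' E₁ E₃ E₂
      · exact absurd h'' h13
      · exact three_roots K κd n hK hn x₃ x₁ x₂ h₃ h'' h E₃ E₁ E₂
  · exact absurd h h12
  · rcases lt_trichotomy x₁ x₃ with h' | h' | h'
    · exact three_roots K κd n hK hn x₂ x₁ x₃ h₂ h h' E₂ E₁ E₃
    · exact absurd h' h13
    · rcases lt_trichotomy x₂ x₃ with h'' | h'' | h''
      · exact three_roots K κd n hK hn x₂ x₃ x₁ h₂ h'' h' E₂ E₃ E₁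
      · exact absurd h'' h23
      · exact three_roots K κd n hK hn x₃ x₂ x₁ h₃ h'' h E₃ E₂ E₁
end

section
/- If the equation x/κ_d = (1 + xⁿ)/(K + xⁿ) with K > 1 and n > 1 has three distinct positive solutions, then κ_d ≥ ((n+1)/(n−1)) · ((n+1)/(n−1))^{1/n}. -/
/-!
Steady states are the positive solutions of `x (K + xⁿ) / (1 + xⁿ) = κ_d`. If there are three of
them, the minimum of the left-hand side between the outer two is attained at an interior critical
point `m` with value at most `κ_d`. A critical point satisfies `K ((n - 1) mⁿ - 1) = mⁿ (mⁿ + n + 1)`,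
so `(n - 1) mⁿ > 1` and the value there is `n m^(n+1) / ((n - 1) mⁿ - 1)`. Writing
`m = ((n + 1) / (n - 1))^(1/n) r`, the claimed bound on this value becomes the AM-GM inequality
`(n + 1) rⁿ ≤ n r^(n+1) + 1`.
-/

open Set

theorem add_one_mul_pow_le {r : ℝ} (hr : 0 ≤ r) (n : ℕ) :
    (n + 1) * r ^ n ≤ n * r ^ (n + 1) + 1 := by
  rcases hr.eq_or_lt with rfl | hr
  · rcases n with _ | n <;> simp
  have bernoulli := one_add_mul_le_pow (a := r⁻¹ - 1) (by linarith [inv_pos.2 hr]) (n + 1)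
  rw [add_sub_cancel, inv_pow] at bernoulli
  have h := mul_le_mul_of_nonneg_left bernoulli (pow_nonneg hr.le (n + 1))
  rw [mul_inv_cancel₀ (by positivity)] at h
  have hr' : r ^ (n + 1) * r⁻¹ = r ^ n := by field_simp; ring
  push_cast at h
  linear_combination h - (n + 1) * hr'

theorem exists_lt_lt_of_ne {α : Type*} [LinearOrder α] {P : α → Prop} {x y z : α}
    (hxy : x ≠ y) (hxz : x ≠ z) (hyz : y ≠ z) (hx : P x) (hy : P y) (hz : P z) :
    ∃ a b c, a < b ∧ b < c ∧ P a ∧ P b ∧ P c := by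
  rcases hxy.lt_or_gt with h | h <;> rcases hxz.lt_or_gt with h' | h' <;>
    rcases hyz.lt_or_gt with h'' | h''
  all_goals first
    | exact ⟨x, y, z, ‹x < y›, ‹y < z›, hx, hy, hz⟩
    | exact ⟨x, z, y, ‹x < z›, ‹z < y›, hx, hz, hy⟩
    | exact ⟨y, x, z, ‹y < x›, ‹x < z›, hy, hx, hz⟩
    | exact ⟨y, z, x, ‹y < z›, ‹z < x›, hy, hz, hx⟩
    | exact ⟨z, x, y, ‹z < x›, ‹x < y›, hz, hx, hy⟩
    | exact ⟨z, y, x, ‹z < y›, ‹y < x›, hz, hy, hx⟩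

theorem exists_isLocalMin_mem_Ioo_le {f : ℝ → ℝ} {a b c : ℝ} (hab : a < b) (hbc : b < c)
    (hf : ContinuousOn f (Icc a c)) (ha : f a = f b) (hc : f c = f b) :
    ∃ m ∈ Ioo a c, IsLocalMin f m ∧ f m ≤ f b := by
  have hb : b ∈ Icc a c := ⟨hab.le, hbc.le⟩
  obtain ⟨m, hm, hmin⟩ := isCompact_Icc.exists_isMinOn ⟨b, hb⟩ hf
  -- A minimum attained only at an endpoint equals `f b`, so `b` is then an interior minimizer.
  by_cases hm' : m ∈ Ioo a c
  · exact ⟨m, hm', hmin.isLocalMin (Icc_mem_nhds hm'.1 hm'.2), hmin hb⟩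
  have hfm : f m = f b := by
    rcases eq_endpoints_or_mem_Ioo_of_mem_Icc hm with rfl | rfl | h
    exacts [ha, hc, absurd h hm']
  have hbmin : IsMinOn f (Icc a c) b := fun x hx => hfm ▸ hmin hx
  exact ⟨b, ⟨hab, hbc⟩, hbmin.isLocalMin (Icc_mem_nhds hab hbc), le_rfl⟩

noncomputable def steadyKappa (K : ℝ) (n : ℕ) (x : ℝ) : ℝ := x * (K + x ^ n) / (1 + x ^ n)

section

variable {K κd x : ℝ} {n : ℕ}

theorem steadyKappa_eq_of_div_eq (hK : 0 < K) (hx : 0 < x)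
    (h : x / κd = (1 + x ^ n) / (K + x ^ n)) : steadyKappa K n x = κd := by
  have hκ : κd ≠ 0 := by
    rintro rfl
    rw [div_zero, eq_comm] at h
    exact (div_pos (by positivity) (by positivity)).ne' h
  rw [div_eq_div_iff hκ (by positivity)] at h
  rw [steadyKappa, div_eq_iff (by positivity)]
  linear_combination h

theorem hasDerivAt_steadyKappa (K : ℝ) (n : ℕ) (hx : 0 ≤ x) :
    HasDerivAt (steadyKappa K n)
      (((x ^ n) ^ 2 - (K * (n - 1) - (n + 1)) * x ^ n + K) / (1 + x ^ n) ^ 2) x := by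
  have hpow := hasDerivAt_pow n x
  refine (((hasDerivAt_id' x).mul (hpow.const_add K)).div (hpow.const_add 1)
    (by positivity)).congr_deriv ?_
  rcases n with _ | n <;>
    simp only [Pi.mul_apply, Nat.cast_zero, zero_mul, Nat.cast_add, Nat.cast_one,
      add_tsub_cancel_right] <;>
    ring

theorem steadyKappa_eq_of_isCritical (hK : 0 < K) (hx : 0 < x)
    (h : (x ^ n) ^ 2 - (K * (n - 1) - (n + 1)) * x ^ n + K = 0) :
    1 < (n - 1) * x ^ n ∧ steadyKappa K n x = n * x ^ (n + 1) / ((n - 1) * x ^ n - 1) := by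
  have ht : 0 < x ^ n := by positivity
  have hK' : K * ((n - 1) * x ^ n - 1) = x ^ n * (x ^ n + n + 1) := by linear_combination -h
  have hpos : 0 < (n - 1) * x ^ n - 1 := by
    refine pos_of_mul_pos_right (hK'.symm ▸ ?_ : 0 < K * _) hK.le
    positivity
  refine ⟨by linarith, ?_⟩
  rw [steadyKappa, div_eq_div_iff (by positivity) hpos.ne']
  linear_combination x * hK'

theorem rpow_mul_le_mul_pow_succ_div (hn : 1 < n) (hx : 0 < x) (h : 1 < (n - 1) * x ^ n) :
    ((n + 1) / (n - 1)) * ((n + 1) / (n - 1)) ^ ((1 : ℝ) / n) ≤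
      n * x ^ (n + 1) / ((n - 1) * x ^ n - 1) := by
  have hn' : (1 : ℝ) < n := by exact_mod_cast hn
  set t := ((n : ℝ) + 1) / (n - 1) with ht
  have ht_pos : 0 < t := by positivity
  have ht_mul : (n - 1) * t = n + 1 := by
    rw [ht]
    field_simp [(by linarith : (n : ℝ) - 1 ≠ 0)]
  set c := t ^ ((1 : ℝ) / n) with hc
  have hc_pos : 0 < c := by positivity
  have hc_pow : c ^ n = t := by
    rw [hc, one_div, Real.rpow_inv_natCast_pow ht_pos.le (by omega)]
  obtain ⟨r, hr, rfl⟩ : ∃ r, 0 < r ∧ x = c * r := ⟨x / c, by positivity, by field_simp⟩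
  have key := add_one_mul_pow_le hr.le n
  rw [le_div_iff₀ (by linarith), mul_pow, mul_pow, hc_pow, pow_succ c, hc_pow]
  calc t * c * ((n - 1) * (t * r ^ n) - 1) = t * c * ((n + 1) * r ^ n - 1) := by
        rw [← ht_mul]; ring
    _ ≤ t * c * (n * r ^ (n + 1)) := by gcongr; linarith
    _ = n * (t * c * r ^ (n + 1)) := by ring

end

theorem bistability_necessary_kappa_general
    (K κd : ℝ) (n : ℕ) (hK : 1 < K) (hn : 1 < n)
    (x₁ x₂ x₃ : ℝ) (h₁ : 0 < x₁) (h₂ : 0 < x₂) (h₃ : 0 < x₃)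
    (h12 : x₁ ≠ x₂) (h13 : x₁ ≠ x₃) (h23 : x₂ ≠ x₃)
    (e₁ : x₁ / κd = (1 + x₁ ^ n) / (K + x₁ ^ n))
    (e₂ : x₂ / κd = (1 + x₂ ^ n) / (K + x₂ ^ n))
    (e₃ : x₃ / κd = (1 + x₃ ^ n) / (K + x₃ ^ n)) :
    (((n : ℝ) + 1) / ((n : ℝ) - 1)) *
      ((((n : ℝ) + 1) / ((n : ℝ) - 1)) ^ ((1 : ℝ) / n)) ≤ κd := by
  have hK₀ : 0 < K := by linarith
  obtain ⟨a, b, c, hab, hbc, ⟨ha, ga⟩, ⟨-, gb⟩, ⟨-, gc⟩⟩ :=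
    exists_lt_lt_of_ne (P := fun x => 0 < x ∧ steadyKappa K n x = κd) h12 h13 h23
      ⟨h₁, steadyKappa_eq_of_div_eq hK₀ h₁ e₁⟩ ⟨h₂, steadyKappa_eq_of_div_eq hK₀ h₂ e₂⟩
      ⟨h₃, steadyKappa_eq_of_div_eq hK₀ h₃ e₃⟩
  have hcont : ContinuousOn (steadyKappa K n) (Icc a c) := fun x hx =>
    (hasDerivAt_steadyKappa K n (ha.le.trans hx.1)).continuousAt.continuousWithinAt
  obtain ⟨m, hm, hmin, hm_le⟩ :=
    exists_isLocalMin_mem_Ioo_le hab hbc hcont (ga.trans gb.symm) (gc.trans gb.symm)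
  have hm₀ : 0 < m := ha.trans hm.1
  have hcrit := hmin.hasDerivAt_eq_zero (hasDerivAt_steadyKappa K n hm₀.le)
  rw [div_eq_zero_iff, or_iff_left (by positivity)] at hcrit
  obtain ⟨hm_pos, hm_eq⟩ := steadyKappa_eq_of_isCritical hK₀ hm₀ hcrit
  calc _ ≤ n * m ^ (n + 1) / ((n - 1) * m ^ n - 1) := rpow_mul_le_mul_pow_succ_div hn hm₀ hm_pos
    _ = steadyKappa K n m := hm_eq.symm
    _ ≤ κd := hm_le.trans gb.le

/-- Necessary condition for three distinct positive steady states: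
κ_d ≥ ((n+1)/(n−1))·((n+1)/(n−1))^{1/n}. -/
theorem bistability_necessary_kappa
    (K κd : ℝ) (n : ℕ) (hK : 1 < K) (hn : 1 < n) (hκ : 0 < κd)
    (x₁ x₂ x₃ : ℝ) (h₁ : 0 < x₁) (h₂ : 0 < x₂) (h₃ : 0 < x₃)
    (h12 : x₁ ≠ x₂) (h13 : x₁ ≠ x₃) (h23 : x₂ ≠ x₃)
    (e₁ : x₁ / κd = (1 + x₁ ^ n) / (K + x₁ ^ n))
    (e₂ : x₂ / κd = (1 + x₂ ^ n) / (K + x₂ ^ n))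
    (e₃ : x₃ / κd = (1 + x₃ ^ n) / (K + x₃ ^ n)) :
    (((n : ℝ) + 1) / ((n : ℝ) - 1)) *
      ((((n : ℝ) + 1) / ((n : ℝ) - 1)) ^ ((1 : ℝ) / n)) ≤ κd :=
  bistability_necessary_kappa_general K κd n hK hn x₁ x₂ x₃ h₁ h₂ h₃ h12 h13 h23 e₁ e₂ e₃
end

section
/- For the cubic eigenvalue equation (λ + γ₁)(λ + γ₂)(λ + γ₃) − γ₁γ₂γ₃ κ_d f'* = 0 with γ₁, γ₂, γ₃ > 0 and κ_d > 0: if 0 ≤ f'* < 1/κ_d then the polynomial has no positive real root, and if f'* > 1/κ_d then it has exactly one positive real root. -/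
/-!
With `g l = (l + γ₁)(l + γ₂)(l + γ₃)` the equation reads `g l = γ₁γ₂γ₃ κd f'`. On `[0, ∞)` the
function `g` is continuous, strictly increasing, starts at `g 0 = γ₁γ₂γ₃` and tends to infinity.
So a positive root exists iff the right-hand side exceeds `γ₁γ₂γ₃`, i.e. iff `κd f' > 1`, and it
is then unique.
-/

open Set Filter Finset

theorem StrictMonoOn.existsUnique_gt_eq_of_tendsto_atTop {α δ : Type*}
    [ConditionallyCompleteLinearOrder α] [TopologicalSpace α] [OrderTopology α] [DenselyOrdered α]
    [LinearOrder δ] [TopologicalSpace δ] [OrderClosedTopology δ]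
    {f : α → δ} {a : α} {c : δ} (hmono : StrictMonoOn f (Ici a)) (hf : ContinuousOn f (Ici a))
    (htop : Tendsto f atTop atTop) (hc : f a < c) : ∃! x, a < x ∧ f x = c := by
  obtain ⟨x, hx, rfl⟩ := intermediate_value_Ioi hf htop hc
  exact ⟨x, ⟨hx, rfl⟩, fun y ⟨hy, hyx⟩ => hmono.injOn (mem_Ici_of_Ioi hy) (mem_Ici_of_Ioi hx) hyx⟩

section ProdAdd

variable {ι : Type*} {s : Finset ι} {a : ι → ℝ}

theorem strictMonoOn_prod_add (hs : s.Nonempty) (ha : ∀ i ∈ s, 0 < a i) :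
    StrictMonoOn (fun l => ∏ i ∈ s, (l + a i)) (Ici 0) := by
  intro l (hl : 0 ≤ l) m _ hlm
  exact prod_lt_prod_of_nonempty (fun i hi => by linarith [ha i hi])
    (fun i _ => add_lt_add_left hlm _) hs

theorem tendsto_prod_add_atTop (hs : s.Nonempty) (ha : ∀ i ∈ s, 0 ≤ a i) :
    Tendsto (fun l => ∏ i ∈ s, (l + a i)) atTop atTop := by
  refine tendsto_atTop_mono' atTop ?_ (tendsto_pow_atTop hs.card_ne_zero)
  filter_upwards [eventually_ge_atTop 0] with l hl
  rw [← prod_const]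
  exact prod_le_prod (fun _ _ => hl) (fun i hi => le_add_of_nonneg_right (ha i hi))

end ProdAdd

/-- The eigenvalue equation (λ+γ₁)(λ+γ₂)(λ+γ₃) − γ₁γ₂γ₃κ_d f'* = 0 has no positive real
root when 0 ≤ f'* < 1/κ_d and exactly one positive real root when f'* > 1/κ_d. -/
theorem eigenvalue_positive_roots
    (γ₁ γ₂ γ₃ κd f' : ℝ) (h₁ : 0 < γ₁) (h₂ : 0 < γ₂) (h₃ : 0 < γ₃) (hκ : 0 < κd) :
    (0 ≤ f' ∧ f' < 1 / κd →
      ∀ l : ℝ, 0 < l → (l + γ₁) * (l + γ₂) * (l + γ₃) - γ₁ * γ₂ * γ₃ * κd * f' ≠ 0) ∧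
    (1 / κd < f' →
      ∃! l : ℝ, 0 < l ∧ (l + γ₁) * (l + γ₂) * (l + γ₃) - γ₁ * γ₂ * γ₃ * κd * f' = 0) := by
  set γ : Fin 3 → ℝ := ![γ₁, γ₂, γ₃]
  set g : ℝ → ℝ := fun l => ∏ i, (l + γ i)
  have hg (l : ℝ) : g l = (l + γ₁) * (l + γ₂) * (l + γ₃) := by
    simp [g, γ, Fin.prod_univ_three]
  have hγ (i : Fin 3) : 0 < γ i := by
    fin_cases i <;> assumption
  have hmono : StrictMonoOn g (Ici 0) := strictMonoOn_prod_add univ_nonempty fun i _ => hγ i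
  have hg0 : g 0 = γ₁ * γ₂ * γ₃ := by simp [hg]
  have hprod : 0 < γ₁ * γ₂ * γ₃ := by positivity
  simp only [sub_ne_zero, sub_eq_zero, ← hg]
  refine ⟨fun ⟨_, hf⟩ l hl => ?_, fun hf => ?_⟩
  · have hκf : κd * f' < 1 := by rwa [lt_div_iff₀ hκ, mul_comm] at hf
    refine (lt_of_le_of_lt ?_ (hmono self_mem_Ici hl.le hl)).ne'
    rw [hg0]
    nlinarith
  · have hκf : 1 < κd * f' := by rwa [div_lt_iff₀ hκ, mul_comm] at hf
    refine hmono.existsUnique_gt_eq_of_tendsto_atTop (by fun_prop)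
      (tendsto_prod_add_atTop univ_nonempty fun i _ => (hγ i).le) ?_
    rw [hg0]
    nlinarith
end

section
/- For positive γ₁, γ₂, γ₃ and a₁ = γ₁+γ₂+γ₃, a₂ = γ₁γ₂+γ₁γ₃+γ₂γ₃, a₃ = (1 − κ_d f'*)γ₁γ₂γ₃, the inequality a₁a₂ − a₃ ≥ (8 + κ_d f'*)γ₁γ₂γ₃ holds; consequently if f'* > −8/κ_d (with κ_d > 0) then a₁a₂ − a₃ > 0. -/
/-- Routh–Hurwitz: a₁a₂ − a₃ ≥ (8 + κ_d f'*)γ₁γ₂γ₃, hence a₁a₂ − a₃ > 0 whenever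
f'* > −8/κ_d. -/
theorem routh_hurwitz_bound
    (γ₁ γ₂ γ₃ κd f' : ℝ) (h₁ : 0 < γ₁) (h₂ : 0 < γ₂) (h₃ : 0 < γ₃) (hκ : 0 < κd)
    (a₁ a₂ a₃ : ℝ) (ha₁ : a₁ = γ₁ + γ₂ + γ₃)
    (ha₂ : a₂ = γ₁ * γ₂ + γ₁ * γ₃ + γ₂ * γ₃)
    (ha₃ : a₃ = (1 - κd * f') * (γ₁ * γ₂ * γ₃)) :
    (8 + κd * f') * (γ₁ * γ₂ * γ₃) ≤ a₁ * a₂ - a₃ ∧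
      (-8 / κd < f' → 0 < a₁ * a₂ - a₃) := by
  subst ha₁ ha₂ ha₃
  have key : (8 + κd * f') * (γ₁ * γ₂ * γ₃) ≤
      (γ₁ + γ₂ + γ₃) * (γ₁ * γ₂ + γ₁ * γ₃ + γ₂ * γ₃) -
        (1 - κd * f') * (γ₁ * γ₂ * γ₃) := by
    nlinarith [sq_nonneg (γ₁ - γ₂), sq_nonneg (γ₁ - γ₃), sq_nonneg (γ₂ - γ₃),
      mul_pos h₁ h₂, mul_pos h₁ h₃, mul_pos h₂ h₃]
  refine ⟨key, fun hf => ?_⟩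
  have h8 : 0 < 8 + κd * f' := by
    have := (div_lt_iff₀ hκ).mp hf
    nlinarith
  have := mul_pos h8 (mul_pos (mul_pos h₁ h₂) h₃)
  linarith
end

section
/- For a repressible operon with bursting, f(x) = (1+xⁿ)/(1+Δxⁿ), Δ > 1: if 0 < κ_b < 1 the equation (1/κ_b)(x/b + 1) = f(x) has no positive solution, and if κ_b > 1 it has exactly one positive solution. -/
/-!
The response `f(x) = (1 + xⁿ)/(1 + Δxⁿ)` starts at `f 0 = 1` and, for `Δ ≥ 1`, is antitone and
bounded by `1` on `[0, ∞)`, while the left-hand side `(1/κ_b)(x/b + 1)` is a strictly increasing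
line starting at `1/κ_b`. If `κ_b < 1` the line starts above `1`, so it never meets `f`. If
`κ_b > 1` it starts below `f 0` and exceeds `1 ≥ f` at `x = bκ_b`, so by the intermediate value
theorem the two graphs cross, and they cross only once because their difference is strictly
increasing.
-/

open Set

theorem existsUnique_pos_eq_of_strictMonoOn_of_antitoneOn {L f : ℝ → ℝ} {M : ℝ}
    (hL : StrictMonoOn L (Ici 0)) (hf : AntitoneOn f (Ici 0))
    (hLc : ContinuousOn L (Ici 0)) (hfc : ContinuousOn f (Ici 0))
    (h0 : L 0 < f 0) (hM0 : 0 ≤ M) (hM : f M < L M) :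
    ∃! x, 0 < x ∧ L x = f x := by
  have hmono : StrictMonoOn (L - f) (Ici 0) := fun a ha c hc hac ↦ by
    linarith [hL ha hc hac, hf ha hc hac.le, Pi.sub_apply L f a, Pi.sub_apply L f c]
  obtain ⟨x, hx, hx0⟩ : ∃ x ∈ Icc 0 M, (L - f) x = 0 :=
    intermediate_value_Icc hM0 ((hLc.sub hfc).mono Icc_subset_Ici_self)
      ⟨(sub_neg.2 h0).le, (sub_pos.2 hM).le⟩
  have hxpos : 0 < x := by
    refine hx.1.lt_of_ne fun h ↦ ?_
    subst h
    exact (sub_neg.2 h0).ne hx0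
  refine ⟨x, ⟨hxpos, sub_eq_zero.1 hx0⟩, fun y ⟨hy, hyx⟩ ↦ ?_⟩
  refine hmono.injOn (mem_Ici.2 hy.le) (mem_Ici.2 hx.1) ?_
  rw [hx0]
  exact sub_eq_zero.2 hyx

noncomputable def repressibleResponse (Δ : ℝ) (n : ℕ) (x : ℝ) : ℝ :=
  (1 + x ^ n) / (1 + Δ * x ^ n)

namespace repressibleResponse

variable {Δ x : ℝ} {n : ℕ}

theorem denom_pos (hΔ : 0 ≤ Δ) (hx : 0 ≤ x) : 0 < 1 + Δ * x ^ n := by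
  have := mul_nonneg hΔ (pow_nonneg hx n)
  linarith

theorem apply_zero (hn : n ≠ 0) : repressibleResponse Δ n 0 = 1 := by
  simp [repressibleResponse, zero_pow hn]

theorem le_one (hΔ : 1 ≤ Δ) (hx : 0 ≤ x) : repressibleResponse Δ n x ≤ 1 := by
  rw [repressibleResponse, div_le_one (denom_pos (by linarith) hx)]
  nlinarith [pow_nonneg hx n]

theorem antitoneOn (hΔ : 1 ≤ Δ) : AntitoneOn (repressibleResponse Δ n) (Ici 0) := by
  intro x hx y hy hxy
  have hxn : x ^ n ≤ y ^ n := pow_le_pow_left₀ hx hxy n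
  rw [repressibleResponse, repressibleResponse,
    div_le_div_iff₀ (denom_pos (by linarith) hy) (denom_pos (by linarith) hx)]
  nlinarith

theorem continuousOn (hΔ : 0 ≤ Δ) : ContinuousOn (repressibleResponse Δ n) (Ici 0) :=
  (continuousOn_const.add (continuousOn_pow n)).div
    (continuousOn_const.add (continuousOn_const.mul (continuousOn_pow n)))
    fun _ hx ↦ (denom_pos hΔ hx).ne'

end repressibleResponse

/-- Repressible operon with bursting: (1/κ_b)(x/b+1) = (1+xⁿ)/(1+Δxⁿ) has no positive
solution for 0 < κ_b < 1, and exactly one positive solution for κ_b > 1. -/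
theorem repressible_bursting_modes
    (b Δ κb : ℝ) (n : ℕ) (hb : 0 < b) (hΔ : 1 < Δ) (hκ : 0 < κb) (hn : 1 ≤ n) :
    (κb < 1 → ¬∃ x : ℝ, 0 < x ∧
        (1 / κb) * (x / b + 1) = (1 + x ^ n) / (1 + Δ * x ^ n)) ∧
    (1 < κb → ∃! x : ℝ, 0 < x ∧
        (1 / κb) * (x / b + 1) = (1 + x ^ n) / (1 + Δ * x ^ n)) := by
  have hκinv : 0 < 1 / κb := one_div_pos.2 hκ
  have hL : StrictMonoOn (fun x : ℝ ↦ (1 / κb) * (x / b + 1)) (Ici 0) := fun x _ y _ hxy ↦ by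
    dsimp only
    gcongr
  constructor
  · rintro hκ1 ⟨x, hx, heq⟩
    have hκinv_gt : 1 < 1 / κb := by rw [lt_div_iff₀ hκ]; linarith
    have hLx : 1 < (1 / κb) * (x / b + 1) := by nlinarith [div_pos hx hb]
    have := repressibleResponse.le_one (n := n) hΔ.le hx.le
    rw [repressibleResponse, ← heq] at this
    linarith
  · intro hκ1
    refine existsUnique_pos_eq_of_strictMonoOn_of_antitoneOn (f := repressibleResponse Δ n)
      (M := b * κb) hL (repressibleResponse.antitoneOn hΔ.le) (by fun_prop)
      (repressibleResponse.continuousOn (by linarith)) ?_ (by positivity) ?_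
    · rw [repressibleResponse.apply_zero (by omega), zero_div, zero_add, mul_one]
      exact (div_lt_one hκ).2 hκ1
    · calc repressibleResponse Δ n (b * κb)
          ≤ 1 := repressibleResponse.le_one hΔ.le (by positivity)
        _ < 1 + 1 / κb := by linarith
        _ = (1 / κb) * (b * κb / b + 1) := by field_simp
end

section
/- For the Fokker–Planck equation ∂u/∂t = −∂[(γκ_d f(x) − γx)u]/∂x + (σ²/2)∂²(xu)/∂x² with reflecting boundary at x = 0, the function u*(x) = C e^{−2γx/σ²} x^{κ_e/Λ − 1}(Λ + Δxⁿ)^θ with κ_e = 2γκ_d/σ², θ = (κ_e/(nΔ))(1 − Δ/Λ), and f(x) = (1+xⁿ)/(Λ+Δxⁿ), satisfies the zero-current condition (γκ_d f(x) − γx)u*(x) − (σ²/2)(d/dx)(x u*(x)) = 0 for all x > 0. -/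
/-! Since `x u(x)` is a product of an exponential and real powers, its derivative is
`u(x) (-2γx/σ² + κe/Λ + θ n Δ xⁿ / (Λ + Δxⁿ))`. The choice of `θ` makes
`(σ²/2) θ n Δ = γ κd (1 - Δ/Λ)`, and with it `(σ²/2)` times that bracket is exactly the drift
`γ κd f(x) - γ x`, so the current vanishes identically. -/

open Real

lemma natCast_mul_pow_pred (n : ℕ) {x : ℝ} (hx : x ≠ 0) :
    (n : ℝ) * x ^ (n - 1) = n * x ^ n / x := by
  rcases n with _ | m
  · simp
  · field_simp
    simp [pow_succ]

lemma hasDerivAt_self_mul_exp_mul_rpow_mul_rpow (C a b c d θ : ℝ) (n : ℕ) {x : ℝ}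
    (hx : x ≠ 0) (hP : c + d * x ^ n ≠ 0) :
    HasDerivAt (fun y => y * (C * exp (a * y) * y ^ b * (c + d * y ^ n) ^ θ))
      (C * exp (a * x) * x ^ b * (c + d * x ^ n) ^ θ *
        (a * x + (b + 1) + θ * n * d * x ^ n / (c + d * x ^ n))) x := by
  have hE : HasDerivAt (fun y => exp (a * y)) (exp (a * x) * a) x := by
    simpa using ((hasDerivAt_id x).const_mul a).exp
  have hX : HasDerivAt (fun y => y ^ b) (b * x ^ (b - 1)) x :=
    hasDerivAt_rpow_const (Or.inl hx)
  have hQ : HasDerivAt (fun y => (c + d * y ^ n) ^ θ)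
      (d * (n * x ^ (n - 1)) * θ * (c + d * x ^ n) ^ (θ - 1)) x :=
    (((hasDerivAt_pow n x).const_mul d).const_add c).rpow_const (Or.inl hP)
  refine ((hasDerivAt_id x).mul (((hE.const_mul C).mul hX).mul hQ)).congr_deriv ?_
  simp only [Pi.mul_apply, id]
  rw [natCast_mul_pow_pred n hx, rpow_sub_one hx, rpow_sub_one hP]
  field_simp
  ring

lemma drift_eq_half_sq_mul_logDeriv {γ σ κd Λ Δ κe θ : ℝ} {n : ℕ} (hσ : σ ≠ 0) (hΛ : Λ ≠ 0)
    (hΔ : Δ ≠ 0) (hn : n ≠ 0) (hκe : κe = 2 * γ * κd / σ ^ 2)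
    (hθ : θ = κe / (n * Δ) * (1 - Δ / Λ)) {x : ℝ} (hP : Λ + Δ * x ^ n ≠ 0) :
    γ * κd * ((1 + x ^ n) / (Λ + Δ * x ^ n)) - γ * x =
      σ ^ 2 / 2 * (-2 * γ / σ ^ 2 * x + (κe / Λ - 1 + 1) +
        θ * n * Δ * x ^ n / (Λ + Δ * x ^ n)) := by
  have hn' : (n : ℝ) ≠ 0 := Nat.cast_ne_zero.mpr hn
  subst hκe hθ
  have hP' : Λ + x ^ n * Δ ≠ 0 := by rwa [mul_comm]
  field_simp
  ring

theorem degradation_noise_zero_current_general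
    (C γ σ κd Λ Δ : ℝ) (n : ℕ) (hσ : 0 < σ)
    (hΛ : 0 < Λ) (hΔ : 0 < Δ) (hn : 1 ≤ n)
    (κe : ℝ) (hκe : κe = 2 * γ * κd / σ ^ 2)
    (θ : ℝ) (hθ : θ = κe / (n * Δ) * (1 - Δ / Λ))
    (f : ℝ → ℝ) (hf : ∀ x, f x = (1 + x ^ n) / (Λ + Δ * x ^ n))
    (u : ℝ → ℝ)
    (hu : ∀ x, u x = C * Real.exp (-2 * γ * x / σ ^ 2) * x ^ (κe / Λ - 1) *
        (Λ + Δ * x ^ n) ^ θ) :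
    ∀ x : ℝ, 0 < x →
      (γ * κd * f x - γ * x) * u x - σ ^ 2 / 2 * deriv (fun y => y * u y) x = 0 := by
  intro x hx
  have hP : 0 < Λ + Δ * x ^ n := by positivity
  have hu' : u = fun y =>
      C * exp (-2 * γ / σ ^ 2 * y) * y ^ (κe / Λ - 1) * (Λ + Δ * y ^ n) ^ θ := by
    funext y
    rw [hu, mul_div_right_comm]
  rw [hu', (hasDerivAt_self_mul_exp_mul_rpow_mul_rpow C _ _ Λ Δ θ n hx.ne' hP.ne').deriv, hf,
    drift_eq_half_sq_mul_logDeriv hσ.ne' hΛ.ne' hΔ.ne' (by omega) hκe hθ hP.ne']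
  ring

/-- Degradation-noise stationary density: u*(x) = C e^{−2γx/σ²} x^{κ_e/Λ−1}(Λ+Δxⁿ)^θ
with κ_e = 2γκ_d/σ² satisfies the zero probability current condition
(γκ_d f(x) − γx)u*(x) − (σ²/2)(d/dx)(x u*(x)) = 0 for all x > 0. -/
theorem degradation_noise_zero_current
    (C γ σ κd Λ Δ : ℝ) (n : ℕ) (hC : 0 < C) (hγ : 0 < γ) (hσ : 0 < σ) (hκd : 0 < κd)
    (hΛ : 0 < Λ) (hΔ : 0 < Δ) (hn : 1 ≤ n)
    (κe : ℝ) (hκe : κe = 2 * γ * κd / σ ^ 2)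
    (θ : ℝ) (hθ : θ = κe / (n * Δ) * (1 - Δ / Λ))
    (f : ℝ → ℝ) (hf : ∀ x, f x = (1 + x ^ n) / (Λ + Δ * x ^ n))
    (u : ℝ → ℝ)
    (hu : ∀ x, u x = C * Real.exp (-2 * γ * x / σ ^ 2) * x ^ (κe / Λ - 1) *
        (Λ + Δ * x ^ n) ^ θ) :
    ∀ x : ℝ, 0 < x →
      (γ * κd * f x - γ * x) * u x - σ ^ 2 / 2 * deriv (fun y => y * u y) x = 0 :=
  degradation_noise_zero_current_general C γ σ κd Λ Δ n hσ hΛ hΔ hn κe hκe θ hθ f hf u hu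
end
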